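/- arXiv:2207.01967 — 2 statements merged into one kernel-verified Lean document; each statement's English description precedes it below -/
import Mathlib

section
/- For any small category C, the assignment sending an object x of C to the slice projection functor Over x ⥤ C (the forgetful functor from the slice category over x), viewed as an object of the over category of Cat over C, and sending a morphism f : x ⟶ y to the postcomposition functor Over.map f : Over x ⥤ Over y, defines a functor from C to the over category Cat/C, and this functor is fully faithful. -/
open CategoryTheory

universe u

/-- The assignment `x ↦ (Over x, Over.forget x : Over x ⥤ C)`, viewed as an object of the
over category `Cat/C`, together with `f ↦ Over.map f`, defines a functor `C ⥤ Cat/C`. -/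
def sliceOverFunctor (C : Type u) [SmallCategory C] : C ⥤ Over (Cat.of C) where
  obj x := Over.mk (Y := Cat.of (Over x)) ((Over.forget x).toCatHom : Cat.of (Over x) ⟶ Cat.of C)
  map {x y} f :=
    Over.homMk ((Over.map f).toCatHom : Cat.of (Over x) ⟶ Cat.of (Over y))
      (Cat.Hom.ext (Over.mapForget_eq f))
  map_id x := by
    apply Over.OverMorphism.ext
    exact Cat.Hom.ext (Over.mapId_eq x)
  map_comp f g := by
    apply Over.OverMorphism.ext
    exact Cat.Hom.ext (Over.mapComp_eq f g)

/-!
A functor `F : Over x ⥤ Over y` over `C` is determined by where it sends the terminal object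
`𝟙 x`: every `u : Over x` comes with the morphism `u.hom : u ⟶ 𝟙 x` of `Over x`, which `F` sends
to a morphism over `C` with the same underlying arrow, so `(F u).hom = u.hom ≫ f` where `f` is the
structure morphism of `F (𝟙 x)`. Hence `F = Over.map f`. Faithfulness holds because `Over.map f`
sends `𝟙 x` to `f`.
-/

namespace CategoryTheory.Over

variable {T : Type*} [Category T]

lemma map_injective {X Y : T} : Function.Injective (map : (X ⟶ Y) → Over X ⥤ Over Y) := by
  intro f g h
  simpa using (w (eqToHom (Functor.congr_obj h (mk (𝟙 X))))).symm

section CompForgetEq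

variable {X Y : T} {F : Over X ⥤ Over Y}

lemma left_obj_of_comp_forget_eq (hF : F ⋙ forget Y = forget X) (u : Over X) :
    (F.obj u).left = u.left :=
  Functor.congr_obj hF u

lemma left_map_of_comp_forget_eq (hF : F ⋙ forget Y = forget X) {u v : Over X} (m : u ⟶ v) :
    (F.map m).left = eqToHom (left_obj_of_comp_forget_eq hF u) ≫ m.left ≫
      eqToHom (left_obj_of_comp_forget_eq hF v).symm := by
  simpa using Functor.congr_hom hF m

lemma hom_obj_of_comp_forget_eq (hF : F ⋙ forget Y = forget X) (u : Over X) :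
    (F.obj u).hom = eqToHom (left_obj_of_comp_forget_eq hF u) ≫ u.hom ≫
      eqToHom (left_obj_of_comp_forget_eq hF (mk (𝟙 X))).symm ≫ (F.obj (mk (𝟙 X))).hom := by
  rw [← w (F.map (homMk u.hom : u ⟶ mk (𝟙 X))), left_map_of_comp_forget_eq hF]
  simp

theorem eq_map_of_comp_forget_eq (hF : F ⋙ forget Y = forget X) :
    F = map (eqToHom (left_obj_of_comp_forget_eq hF (mk (𝟙 X))).symm ≫ (F.obj (mk (𝟙 X))).hom) := by
  refine Functor.ext (fun u ↦ CostructuredArrow.obj_ext _ _ (left_obj_of_comp_forget_eq hF u) ?_)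
    fun u v m ↦ ?_
  · simp [hom_obj_of_comp_forget_eq hF u]
  · ext
    simp [left_map_of_comp_forget_eq hF, eqToHom_left]

end CompForgetEq

end CategoryTheory.Over

/-- The functor `C ⥤ Cat/C` sending `x` to the slice projection `Over x ⥤ C` and
`f : x ⟶ y` to the postcomposition functor `Over.map f` is fully faithful. -/
theorem sliceOverFunctor_full_and_faithful (C : Type u) [SmallCategory C] :
    (sliceOverFunctor C).Full ∧ (sliceOverFunctor C).Faithful := by
  refine ⟨⟨fun {x y} g ↦ ?_⟩, ⟨fun h ↦ Over.map_injective (congrArg (·.left.toFunctor) h)⟩⟩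
  have hg : g.left.toFunctor ⋙ Over.forget y = Over.forget x := congrArg Cat.Hom.toFunctor g.w
  exact ⟨_, Over.OverMorphism.ext (Cat.Hom.ext (Over.eq_map_of_comp_forget_eq hg).symm)⟩
end

section
/- For any small category C and any objects x, y of C, the map sending a morphism f : x ⟶ y to the postcomposition functor Over.map f : Over x ⥤ Over y is a bijection from the hom-set Hom_C(x, y) to the set of functors F : Over x ⥤ Over y satisfying F ⋙ Over.forget y = Over.forget x (i.e., functors strictly commuting with the slice projections). In particular, every functor between slice categories commuting strictly with the projections to C is of the form Over.map f for a unique f : x ⟶ y. -/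
/-!
A functor `F` over the projections is determined by the image of the terminal object `𝟙 x`,
whose structure map is some `f : x ⟶ y`: applying `F` to the unique map `a ⟶ 𝟙 x` (which is
`a.hom` itself) and using that `F` does not change underlying morphisms shows `F a = a.hom ≫ f`.
Injectivity holds because `Over.map f` sends `𝟙 x` to `f`.
-/

open CategoryTheory
universe u

namespace CategoryTheory.Over

variable {C : Type*} [Category C] {x y : C}

lemma obj_ext {a b : Over x} (h : a.left = b.left) (hh : a.hom = eqToHom h ≫ b.hom) : a = b := by
  obtain ⟨l, ⟨⟩, f⟩ := a
  obtain ⟨l', ⟨⟩, f'⟩ := b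
  change l = l' at h
  subst h
  simp only [eqToHom_refl, Category.id_comp] at hh
  subst hh
  rfl

lemma map_injective_s1 : Function.Injective (Over.map : (x ⟶ y) → (Over x ⥤ Over y)) := by
  intro f g h
  have e := Functor.congr_obj h (Over.mk (𝟙 x))
  simpa [Over.eqToHom_left] using (Over.w (eqToHom e)).symm

section CompForgetEq

variable {F : Over x ⥤ Over y} (hF : F ⋙ Over.forget y = Over.forget x)
include hF

lemma left_obj_eq_of_comp_forget_eq (a : Over x) : (F.obj a).left = a.left :=
  Functor.congr_obj hF a

lemma left_map_eq_of_comp_forget_eq {a b : Over x} (m : a ⟶ b) :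
    (F.map m).left = eqToHom (left_obj_eq_of_comp_forget_eq hF a) ≫ m.left ≫
      eqToHom (left_obj_eq_of_comp_forget_eq hF b).symm := by
  simpa using Functor.congr_hom hF m

def homOfCompForgetEq : x ⟶ y :=
  eqToHom (left_obj_eq_of_comp_forget_eq hF (Over.mk (𝟙 x))).symm ≫ (F.obj (Over.mk (𝟙 x))).hom

lemma hom_obj_eq_of_comp_forget_eq (a : Over x) :
    (F.obj a).hom = eqToHom (left_obj_eq_of_comp_forget_eq hF a) ≫ a.hom ≫ homOfCompForgetEq hF := by
  have hw := Over.w (F.map (Over.homMk a.hom : a ⟶ Over.mk (𝟙 x)))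
  rw [← hw, left_map_eq_of_comp_forget_eq hF]
  simp [homOfCompForgetEq]

theorem eq_map_of_comp_forget_eq_s1 : F = Over.map (homOfCompForgetEq hF) := by
  refine Functor.ext (fun a => obj_ext (left_obj_eq_of_comp_forget_eq hF a) ?_) (fun a b m => ?_)
  · simp [hom_obj_eq_of_comp_forget_eq hF a]
  · ext
    simp [Over.eqToHom_left, left_map_eq_of_comp_forget_eq hF m]

end CompForgetEq

end CategoryTheory.Over

/-- For objects `x y` of a small category `C`, the map `f ↦ Over.map f` is a bijection from
`Hom_C(x, y)` onto the set of functors `F : Over x ⥤ Over y` strictly commuting with the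
slice projections, i.e. satisfying `F ⋙ Over.forget y = Over.forget x`. -/
theorem overMap_bijective_onto_projection_preserving_functors
    (C : Type u) [SmallCategory C] (x y : C) :
    Function.Bijective (fun f : x ⟶ y =>
      (⟨Over.map f, Over.mapForget_eq f⟩ :
        {F : Over x ⥤ Over y // F ⋙ Over.forget y = Over.forget x})) :=
  ⟨fun _ _ h => Over.map_injective_s1 (congrArg Subtype.val h),
    fun ⟨_, hF⟩ => ⟨_, Subtype.ext (Over.eq_map_of_comp_forget_eq_s1 hF).symm⟩⟩
end
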